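/- arXiv:2006.00466 — 3 statements merged into one kernel-verified Lean document; each statement's English description precedes it below -/
import Mathlib

section
/- Let p ≥ 5 be a prime. If the alternating group A_p on p letters has a solvable p-complement, then p = 5. -/
/-!
A `p`-complement `H` of `A_p` has index `p`, since `p` divides `p! / 2` exactly once. As `A_p` is
simple, it acts faithfully on the `p` cosets of `H`, and its image, of index `2` in `S_p`, contains
the alternating group of the cosets. So the stabilizer `H` of the trivial coset maps onto a group
containing `A_{p-1}`, which is not solvable once `p ≥ 7`.
-/

open Equiv MulAction
open scoped Nat

theorem Subgroup.index_eq_pow_factorization_card {G : Type*} [Group G] [Finite G] {p k : ℕ}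
    (hp : p.Prime) {H : Subgroup G} (hk : H.index = p ^ k) (hcop : (Nat.card H).Coprime p) :
    H.index = p ^ (Nat.card G).factorization p := by
  rw [← H.card_mul_index, hk, Nat.factorization_mul Nat.card_pos.ne' (pow_ne_zero k hp.ne_zero),
    Finsupp.add_apply, Nat.factorization_eq_zero_of_not_dvd (hp.coprime_iff_not_dvd.mp hcop.symm),
    hp.factorization_pow, Finsupp.single_eq_same, zero_add]

theorem alternatingGroup.factorization_card_fin_prime {p : ℕ} (hp : p.Prime) (hp2 : p ≠ 2) :
    (Nat.card (alternatingGroup (Fin p))).factorization p = 1 := by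
  have : Nontrivial (Fin p) := Fin.nontrivial_iff_two_le.mpr hp.two_le
  have hcard : 2 * Nat.card (alternatingGroup (Fin p)) = p * (p - 1)! := by
    rw [two_mul_nat_card_alternatingGroup, Nat.card_perm, Nat.card_fin,
      Nat.mul_factorial_pred hp.ne_zero]
  have h2 : ¬ p ∣ 2 := fun h => hp2 ((Nat.prime_dvd_prime_iff_eq hp Nat.prime_two).mp h)
  have hpred : ¬ p ∣ (p - 1)! := by
    rw [hp.dvd_factorial]
    have := hp.two_le
    omega
  have key := congrArg (Nat.factorization · p) hcard
  rwa [Nat.factorization_mul two_ne_zero Nat.card_pos.ne',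
    Nat.factorization_mul hp.ne_zero (Nat.factorial_ne_zero _), Finsupp.add_apply,
    Finsupp.add_apply, Nat.factorization_eq_zero_of_not_dvd h2,
    Nat.factorization_eq_zero_of_not_dvd hpred, hp.factorization_self, zero_add,
    add_zero] at key

theorem alternatingGroup.not_isSolvable {α : Type*} [Fintype α] [DecidableEq α]
    (hα : 5 ≤ Nat.card α) : ¬ Group.IsSolvable (alternatingGroup α) := by
  have := alternatingGroup.isSimpleGroup hα
  rw [← IsSimpleGroup.comm_iff_isSolvable]
  intro hcomm
  have := alternatingGroup.isMulCommutative_iff_card_le_three.mp ⟨⟨hcomm⟩⟩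
  omega

theorem MulAction.toPermHom_injective_of_isSimpleGroup {G : Type*} [Group G] [IsSimpleGroup G]
    {H : Subgroup G} (hH : H ≠ ⊤) : Function.Injective (toPermHom G (G ⧸ H)) := by
  rw [← MonoidHom.ker_eq_bot_iff, ← Subgroup.normalCore_eq_ker]
  refine (IsSimpleGroup.eq_bot_or_eq_top_of_normal _ H.normalCore_normal).resolve_right ?_
  exact fun htop => hH (top_le_iff.mp (htop ▸ H.normalCore_le))

theorem alternatingGroup_le_range_of_injective {G X : Type*} [Group G] [Finite G] [Fintype X]
    [DecidableEq X] {f : G →* Perm X} (hf : Function.Injective f)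
    (hcard : 2 * Nat.card G = Nat.card (Perm X)) :
    alternatingGroup X ≤ f.range := by
  refine Perm.alternatingGroup_le_of_index_le_two (le_of_eq ?_)
  have hrange : Nat.card f.range = Nat.card G :=
    (Nat.card_congr (MonoidHom.ofInjective hf).toEquiv).symm
  apply Nat.eq_of_mul_eq_mul_right (Nat.card_pos (α := G))
  rw [← hrange, Subgroup.index_mul_card, hrange, ← hcard, mul_comm]

theorem MulAction.not_isSolvable_stabilizer_of_alternatingGroup_le {G X : Type*} [Group G]
    [MulAction G X] [Fintype X] [DecidableEq X]
    (halt : alternatingGroup X ≤ (toPermHom G X).range) (hX : 6 ≤ Nat.card X) (x : X) :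
    ¬ Group.IsSolvable (stabilizer G x) := by
  intro hsolv
  set s : Finset X := {x}ᶜ
  set L := (stabilizer G x).map (toPermHom G X)
  have hL : Group.IsSolvable L :=
    Group.isSolvable_of_surjective ((toPermHom G X).subgroupMap_surjective (stabilizer G x))
  have hmem (u : alternatingGroup s) : (alternatingGroup.ofSubtype s u : Perm X) ∈ L := by
    obtain ⟨g, hg⟩ := halt (alternatingGroup.ofSubtype s u).2
    refine ⟨g, ?_, hg⟩
    show toPermHom G X g x = x
    rw [hg, alternatingGroup.coe_ofSubtype, Perm.ofSubtype_apply_of_not_mem]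
    simp [s]
  have hinj : Function.Injective
      (((alternatingGroup X).subtype.comp (alternatingGroup.ofSubtype s)).codRestrict L hmem) :=
    fun u v huv => alternatingGroup.ofSubtype_injective (Subtype.ext (congrArg Subtype.val huv :))
  refine alternatingGroup.not_isSolvable ?_ (Group.isSolvable_of_isSolvable_injective hinj)
  rw [Nat.card_eq_fintype_card, Fintype.card_coe, Finset.card_compl, Finset.card_singleton,
    ← Nat.card_eq_fintype_card]
  omega

/-- If `p ≥ 5` is a prime and the alternating group on `p` letters has a solvable
`p`-complement, then `p = 5`. -/
theorem alternating_solvable_p_complement (p : ℕ) (hp : p.Prime) (h5 : 5 ≤ p)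
    (H : Subgroup (alternatingGroup (Fin p))) (hsolv : IsSolvable H)
    (hindex : ∃ k : ℕ, H.index = p ^ k)
    (hcop : Nat.Coprime (Nat.card H) p) :
    p = 5 := by
  classical
  by_contra hne
  obtain ⟨k, hk⟩ := hindex
  have hidx : H.index = p := by
    rw [H.index_eq_pow_factorization_card hp hk hcop,
      alternatingGroup.factorization_card_fin_prime hp (by omega), pow_one]
  have : IsSimpleGroup (alternatingGroup (Fin p)) :=
    alternatingGroup.isSimpleGroup (by rwa [Nat.card_fin])
  have hH : H ≠ ⊤ := by
    rintro rfl
    rw [Subgroup.index_top] at hidx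
    omega
  have : Nontrivial (Fin p) := Fin.nontrivial_iff_two_le.mpr hp.two_le
  have halt := alternatingGroup_le_range_of_injective (toPermHom_injective_of_isSimpleGroup hH)
    (by rw [two_mul_nat_card_alternatingGroup, Nat.card_perm, Nat.card_perm, Nat.card_fin,
      ← Subgroup.index, hidx])
  refine not_isSolvable_stabilizer_of_alternatingGroup_le halt (by rw [← Subgroup.index]; omega)
    ((1 : alternatingGroup (Fin p)) : alternatingGroup (Fin p) ⧸ H) ?_
  rwa [stabilizer_quotient]
end

section
/- Let q > 7 be an odd prime power such that q + 1 is a power of 2, and let n be a positive integer with 2^n ≤ q + 1. Then there is no injective group homomorphism from PSL_2(q) into GL_n(2), the group of invertible n×n matrices over the field with 2 elements. -/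
open Matrix Polynomial
open scoped MatrixGroups

/-!
Left multiplication by an element `v` of `𝔽_{q²}` of order `q + 1` is an `𝔽_q`-linear map of
determinant `N(v) = v ^ (q + 1) = 1`, and its image in `PSL₂(q)` has order
`(q + 1) / 2 = 2 ^ (k - 1)` when `q + 1 = 2 ^ k`. An embedding into `GL_n(2)` would send it to a
matrix `M` with `M ^ 2 ^ (k - 1) = 1`. In characteristic `2` this makes `M - 1` nilpotent, hence
`(M - 1) ^ n = 0`, and then `M ^ 2 ^ b = 1` for every `b` with `n ≤ 2 ^ b`. Since
`n ≤ k ≤ 2 ^ (k - 2)` once `k ≥ 4`, the order of `M` would divide `2 ^ (k - 2)`.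
-/

namespace Matrix

variable {R ι : Type*} [CommRing R] [IsDomain R] [Fintype ι] [DecidableEq ι]

theorem pow_card_eq_zero_of_isNilpotent {N : Matrix ι ι R} (hN : IsNilpotent N) :
    N ^ Fintype.card ι = 0 := by
  have hcharpoly : N.charpoly = X ^ Fintype.card ι :=
    sub_eq_zero.mp (isNilpotent_charpoly_sub_pow_of_isNilpotent hN).eq_zero
  simpa [hcharpoly] using aeval_self_charpoly N

theorem pow_char_pow_eq_one_of_card_le (p : ℕ) [Fact p.Prime] [CharP R p] {M : Matrix ι ι R}
    {a b : ℕ} (hM : M ^ p ^ a = 1) (hb : Fintype.card ι ≤ p ^ b) : M ^ p ^ b = 1 := by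
  cases isEmpty_or_nonempty ι
  · exact Subsingleton.elim _ _
  have hsub (c : ℕ) : (M - 1) ^ p ^ c = M ^ p ^ c - 1 := by
    rw [sub_pow_char_pow_of_commute p c (Commute.one_right M), one_pow]
  have hnil : IsNilpotent (M - 1) := ⟨p ^ a, by rw [hsub, hM, sub_self]⟩
  rw [← sub_eq_zero, ← hsub]
  exact pow_eq_zero_of_le hb (pow_card_eq_zero_of_isNilpotent hnil)

end Matrix

namespace Matrix.SpecialLinearGroup

theorem mem_center_iff_coe_eq_one_or_neg_one {R : Type*} [CommRing R] [NoZeroDivisors R]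
    {A : SL(2, R)} :
    A ∈ Subgroup.center SL(2, R) ↔
      (A : Matrix (Fin 2) (Fin 2) R) = 1 ∨ (A : Matrix (Fin 2) (Fin 2) R) = -1 := by
  rw [mem_center_iff, Fintype.card_fin]
  constructor
  · rintro ⟨r, hr, hrA⟩
    rw [← hrA]
    rcases mul_self_eq_one_iff.mp (sq r ▸ hr) with rfl | rfl <;>
      simp only [map_neg, map_one, true_or, or_true]
  · rintro (h | h)
    · exact ⟨1, one_pow 2, by rw [h, map_one]⟩
    · exact ⟨-1, by norm_num, by rw [h, map_neg, map_one]⟩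

end Matrix.SpecialLinearGroup

theorem exists_orderOf_PSL_two_eq_orderOf_sq {F K : Type*} [Field F] [Field K] [Algebra F K]
    (b : Module.Basis (Fin 2) F K) {v : K} (hv : Algebra.norm F v = 1) :
    ∃ h : PSL(2, F), orderOf h = orderOf (v ^ 2) := by
  let g : SL(2, F) := ⟨Algebra.leftMulMatrix b v, by rwa [← Algebra.norm_eq_matrix_det]⟩
  refine ⟨QuotientGroup.mk g, orderOf_eq_orderOf_iff.mpr fun j ↦ ?_⟩
  have hinj := Algebra.leftMulMatrix_injective b
  rw [← QuotientGroup.mk_pow, QuotientGroup.eq_one_iff,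
    Matrix.SpecialLinearGroup.mem_center_iff_coe_eq_one_or_neg_one,
    Matrix.SpecialLinearGroup.coe_pow, ← map_pow, pow_right_comm,
    ← map_one (Algebra.leftMulMatrix b), ← map_neg, hinj.eq_iff, hinj.eq_iff, sq,
    mul_self_eq_one_iff]

theorem FiniteField.exists_orderOf_eq_card_add_one_and_norm_eq_one (F K : Type*) [Field F]
    [Fintype F] [Field K] [Fintype K] [Algebra F K] (hK : Module.finrank F K = 2) :
    ∃ v : K, orderOf v = Fintype.card F + 1 ∧ Algebra.norm F v = 1 := by
  set q := Fintype.card F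
  have hcard : Nat.card Kˣ = (q + 1) * (q - 1) := by
    rw [Nat.card_units, Nat.card_eq_fintype_card, Module.card_eq_pow_finrank (K := F), hK,
      ← Nat.sq_sub_sq, one_pow]
  have hq : 1 < q := Fintype.one_lt_card
  obtain ⟨ζ, hζ⟩ := IsCyclic.exists_ofOrder_eq_natCard (α := Kˣ)
  have hv : orderOf ((ζ ^ (q - 1) : Kˣ) : K) = q + 1 := by
    have := orderOf_pow_orderOf_div (x := ζ) (n := q + 1)
      (by rw [hζ, hcard]; exact Nat.mul_ne_zero (by omega) (by omega))
      (by rw [hζ, hcard]; exact dvd_mul_right _ _)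
    rwa [hζ, hcard, Nat.mul_div_cancel_left _ q.succ_pos, ← orderOf_units] at this
  refine ⟨_, hv, (algebraMap F K).injective ?_⟩
  rw [FiniteField.algebraMap_norm_eq_pow, ← Nat.card_units, hcard, Nat.card_eq_fintype_card,
    Nat.mul_div_cancel _ (by omega), ← hv, pow_orderOf_eq_one, map_one]

theorem exists_orderOf_PSL_two_eq (F : Type*) [Field F] [Fintype F] :
    ∃ h : PSL(2, F), orderOf h = (Fintype.card F + 1) / Nat.gcd (Fintype.card F + 1) 2 := by
  obtain ⟨p, _⟩ := CharP.exists F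
  have := Fact.mk (CharP.char_is_prime F p)
  let K := FiniteField.Extension F p 2
  let := Fintype.ofFinite K
  have hK : Module.finrank F K = 2 := FiniteField.finrank_extension F p 2
  obtain ⟨v, hv, hnorm⟩ := FiniteField.exists_orderOf_eq_card_add_one_and_norm_eq_one F K hK
  obtain ⟨h, hh⟩ := exists_orderOf_PSL_two_eq_orderOf_sq (Module.finBasisOfFinrankEq F K hK) hnorm
  exact ⟨h, by rw [hh, orderOf_pow' v two_ne_zero, hv]⟩

theorem no_embedding_psl2_into_gln_2_general (q : ℕ)
    (hq7 : 7 < q) (hpow : ∃ k : ℕ, q + 1 = 2 ^ k)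
    (n : ℕ) (hle : 2 ^ n ≤ q + 1)
    (F : Type*) [Field F] [Fintype F] (hF : Fintype.card F = q) :
    ¬ ∃ f : PSL(2, F) →* GL (Fin n) (ZMod 2), Function.Injective f := by
  rintro ⟨f, hf⟩
  obtain ⟨k, hk⟩ := hpow
  obtain ⟨m, rfl⟩ : ∃ m, k = m + 4 := ⟨k - 4, by
    have : 2 ^ 3 < 2 ^ k := by omega
    have := (Nat.pow_lt_pow_iff_right (by norm_num)).mp this
    omega⟩
  obtain ⟨h, hh⟩ := exists_orderOf_PSL_two_eq F
  have horder : orderOf h = 2 ^ (m + 3) := by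
    rw [hh, hF, hk, Nat.gcd_eq_right (dvd_pow_self 2 (by omega)), pow_succ,
      Nat.mul_div_cancel _ two_pos]
  have hM : orderOf (f h : Matrix (Fin n) (Fin n) (ZMod 2)) = 2 ^ (m + 3) := by
    rw [orderOf_units, orderOf_injective f hf, horder]
  have hnm : n ≤ m + 4 := (Nat.pow_le_pow_iff_right (by norm_num)).mp (hk ▸ hle)
  have hcard : Fintype.card (Fin n) ≤ 2 ^ (m + 2) := by
    have := Nat.lt_two_pow_self (n := m)
    rw [Fintype.card_fin, pow_add]
    omega
  have hdvd := orderOf_dvd_of_pow_eq_one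
    (Matrix.pow_char_pow_eq_one_of_card_le 2 (hM ▸ pow_orderOf_eq_one _) hcard)
  rw [hM, Nat.pow_dvd_pow_iff_le_right (by norm_num)] at hdvd
  omega

/-- If `q > 7` is an odd prime power with `q + 1` a power of `2`, and `n` is a positive
integer with `2^n ≤ q + 1`, then there is no injective group homomorphism from `PSL₂(q)`
into `GL_n(2)`. -/
theorem no_embedding_psl2_into_gln_2 (q : ℕ) (hq : IsPrimePow q) (hodd : Odd q)
    (hq7 : 7 < q) (hpow : ∃ k : ℕ, q + 1 = 2 ^ k)
    (n : ℕ) (hn : 0 < n) (hle : 2 ^ n ≤ q + 1)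
    (F : Type*) [Field F] [Fintype F] (hF : Fintype.card F = q) :
    ¬ ∃ f : PSL(2, F) →* GL (Fin n) (ZMod 2), Function.Injective f :=
  no_embedding_psl2_into_gln_2_general q hq7 hpow n hle F hF
end

section
/- Let q > 4 be a power of 2 and let p be an odd prime such that q + 1 is a power of p, and let n be a positive integer with p^n ≤ q + 1. Then there is no injective group homomorphism from PSL_2(q) into GL_n(p), the group of invertible n×n matrices over the field with p elements. -/
open Matrix
open scoped MatrixGroups

/-! If `2 ^ m + 1 = p ^ k` with `p` odd then `k ≤ 2`: for even `k` the factors `p^(k/2) ∓ 1` are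
powers of `2` differing by `2`, and for odd `k` the odd geometric sum `1 + p + ⋯ + p^(k-1)` divides
`2 ^ m`. Now `q + 1 = p ^ k` divides `|SL₂(q)| = q(q² - 1)`, and the centre has order at most `2`,
so `p ^ k` divides `|PSL₂(q)|`. But the `p`-part of `|GLₙ(p)|` is `p ^ (n choose 2)`, and
`n choose 2 < k` because `n ≤ k ≤ 2`. -/

lemma eq_three_of_sub_one_mul_add_one_eq_two_pow {a m : ℕ} (ha : 3 ≤ a)
    (h : (a - 1) * (a + 1) = 2 ^ m) : a = 3 := by
  obtain ⟨c, -, hc⟩ := (Nat.dvd_prime_pow Nat.prime_two).mp (Dvd.intro _ h)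
  obtain ⟨d, -, hd⟩ := (Nat.dvd_prime_pow Nat.prime_two).mp (Dvd.intro_left _ h)
  have hcd : 2 ^ c ∣ 2 ^ d :=
    pow_dvd_pow 2 ((pow_le_pow_iff_right₀ one_lt_two).mp (by rw [← hc, ← hd]; omega))
  have h2 : 2 ^ c ∣ 2 := by
    simpa [← hc, ← hd, show a + 1 - (a - 1) = 2 by omega] using Nat.dvd_sub hcd (dvd_refl _)
  have := Nat.le_of_dvd two_pos h2
  omega

lemma Odd.le_two_of_two_pow_add_one_eq_pow {p m k : ℕ} (hp : Odd p)
    (h : 2 ^ m + 1 = p ^ k) : k ≤ 2 := by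
  have hp3 : 3 ≤ p := by
    obtain ⟨r, rfl⟩ := hp
    rcases r with _ | r
    · simp at h
    · omega
  rcases Nat.even_or_odd k with ⟨j, rfl⟩ | hk
  · rcases Nat.eq_zero_or_pos j with rfl | hj
    · simp
    have hpj : 3 ≤ p ^ j := hp3.trans (Nat.le_self_pow hj.ne' p)
    have hsq : (p ^ j - 1) * (p ^ j + 1) = 2 ^ m := by
      rw [pow_add] at h
      zify [hpj.trans' (by norm_num : 1 ≤ 3)] at h ⊢
      linear_combination -h
    have hpj3 := eq_three_of_sub_one_mul_add_one_eq_two_pow hpj hsq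
    by_contra! hj2
    have : 3 ^ 2 ≤ p ^ j :=
      (Nat.pow_le_pow_left hp3 2).trans (Nat.pow_le_pow_right (by omega) (by omega))
    omega
  · have hS : (∑ i ∈ Finset.range k, p ^ i) * (p - 1) = 2 ^ m := by
      have := geom_sum_mul_add (p - 1) k
      rw [Nat.sub_add_cancel (by omega)] at this
      omega
    have hSodd : Odd (∑ i ∈ Finset.range k, p ^ i) := by
      rw [Finset.odd_sum_iff_odd_card_odd, Finset.filter_true_of_mem fun i _ ↦ hp.pow,
        Finset.card_range]
      exact hk
    have hS1 : ∑ i ∈ Finset.range k, p ^ i = 1 :=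
      Nat.Coprime.eq_one_of_dvd (Nat.coprime_two_right.mpr hSodd |>.pow_right m) (Dvd.intro _ hS)
    have hkS : k ≤ ∑ i ∈ Finset.range k, p ^ i := by
      simpa using Finset.card_nsmul_le_sum (Finset.range k) (p ^ ·) 1
        fun i _ ↦ Nat.one_le_pow _ _ (by omega)
    omega

lemma Matrix.card_GL_eq_card_SL_mul_card_units (n R : Type*) [Fintype n] [DecidableEq n]
    [Nonempty n] [CommRing R] :
    Nat.card (GL n R) = Nat.card (SpecialLinearGroup n R) * Nat.card Rˣ := by
  have hker : (GeneralLinearGroup.det : GL n R →* Rˣ).ker = SpecialLinearGroup.toGL.range := by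
    ext g
    simpa [Units.ext_iff] using ⟨fun hg ↦ ⟨⟨g, hg⟩, rfl⟩, fun ⟨A, hA⟩ ↦ by simp [← hA]⟩
  rw [Subgroup.card_eq_card_quotient_mul_card_subgroup GeneralLinearGroup.det.ker, mul_comm,
    Nat.card_congr (QuotientGroup.quotientKerEquivOfSurjective _
      GeneralLinearGroup.det_surjective).toEquiv, hker,
    Nat.card_congr (MonoidHom.ofInjective SpecialLinearGroup.toGL_injective).toEquiv.symm]

lemma Matrix.card_SL_two (F : Type*) [Field F] [Fintype F] :
    Nat.card SL(2, F) = Fintype.card F * (Fintype.card F ^ 2 - 1) := by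
  have h := card_GL_eq_card_SL_mul_card_units (Fin 2) F
  rw [card_GL_field, Fin.prod_univ_two, Nat.card_units, Nat.card_eq_fintype_card (α := F)] at h
  have hq : 2 ≤ Fintype.card F := Fintype.one_lt_card
  generalize Fintype.card F = q at h hq ⊢
  refine Nat.eq_of_mul_eq_mul_right (by omega : 0 < q - 1) (h.symm.trans ?_)
  simp only [Fin.val_zero, Fin.val_one, pow_zero, pow_one]
  zify [Nat.one_le_pow 2 q (by omega), Nat.le_self_pow two_ne_zero q, hq.trans' one_le_two]
  ring

lemma Matrix.dvd_card_PSL_two_of_odd {F : Type*} [Field F] {d : ℕ} (hd : Odd d)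
    (h : d ∣ Nat.card SL(2, F)) : d ∣ Nat.card PSL(2, F) := by
  have e := (SpecialLinearGroup.center_equiv_rootsOfUnity' (R := F) (0 : Fin 2)).toEquiv
  have : Finite (Subgroup.center SL(2, F)) := .of_equiv _ e.symm
  have hcenter : Nat.card (Subgroup.center SL(2, F)) ≤ 2 := by
    simpa using (Nat.card_congr e).trans_le (card_rootsOfUnity F 2)
  have hcop : d.Coprime (Nat.card (Subgroup.center SL(2, F))) := by
    interval_cases hc : Nat.card (Subgroup.center SL(2, F))
    · exact absurd hc Nat.card_pos.ne'
    · exact Nat.coprime_one_right d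
    · exact Nat.coprime_two_right.mpr hd
  exact hcop.dvd_of_dvd_mul_right
    ((Subgroup.card_eq_card_quotient_mul_card_subgroup (Subgroup.center SL(2, F))) ▸ h)

lemma Matrix.card_GL_field_eq_pow_mul (F : Type*) [Field F] [Fintype F] (n : ℕ) :
    Nat.card (GL (Fin n) F) =
      Fintype.card F ^ n.choose 2 * ∏ i : Fin n, (Fintype.card F ^ (n - i) - 1) := by
  have hsum : ∑ i : Fin n, (i : ℕ) = n.choose 2 := by
    rw [Fin.sum_univ_eq_sum_range (fun i ↦ i) n, Finset.sum_range_id, Nat.choose_two_right]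
  rw [card_GL_field, ← hsum, ← Finset.prod_pow_eq_pow_sum, ← Finset.prod_mul_distrib]
  refine Finset.prod_congr rfl fun i _ ↦ ?_
  rw [Nat.mul_sub_one, ← pow_add, Nat.add_sub_cancel' i.is_lt.le]

lemma Matrix.le_choose_two_of_pow_dvd_card_GL {p k n : ℕ} [hp : Fact p.Prime]
    (h : p ^ k ∣ Nat.card (GL (Fin n) (ZMod p))) : k ≤ n.choose 2 := by
  rw [card_GL_field_eq_pow_mul, ZMod.card] at h
  have hcop : (p ^ k).Coprime (∏ i : Fin n, (p ^ (n - i) - 1)) := by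
    refine Nat.Coprime.pow_left _ (Nat.Coprime.prod_right fun i _ ↦ ?_)
    rw [hp.out.coprime_iff_not_dvd]
    intro hdvd
    have := Nat.dvd_sub (dvd_pow_self p (by omega : n - i ≠ 0)) hdvd
    rw [Nat.sub_sub_self (Nat.one_le_pow _ _ hp.out.pos)] at this
    exact hp.out.not_dvd_one this
  exact (Nat.pow_dvd_pow_iff_le_right hp.out.one_lt).mp (hcop.dvd_of_dvd_mul_right h)

theorem no_embedding_psl2_even_into_gln_p_general (q p : ℕ) (hq2 : ∃ m : ℕ, q = 2 ^ m)
    (hp : p.Prime) (hpodd : Odd p) (hpow : ∃ k : ℕ, q + 1 = p ^ k)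
    (n : ℕ) (hle : p ^ n ≤ q + 1)
    (F : Type*) [Field F] [Fintype F] (hF : Fintype.card F = q) :
    ¬ ∃ f : PSL(2, F) →* GL (Fin n) (ZMod p), Function.Injective f := by
  rintro ⟨f, hf⟩
  obtain ⟨m, rfl⟩ := hq2
  obtain ⟨k, hk⟩ := hpow
  have : Fact p.Prime := ⟨hp⟩
  have hk2 : k ≤ 2 := hpodd.le_two_of_two_pow_add_one_eq_pow hk
  have hnk : n ≤ k := (pow_le_pow_iff_right₀ hp.one_lt).mp (hk ▸ hle)
  have hk0 : 0 < k := Nat.pos_of_ne_zero (by rintro rfl; simp at hk)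
  have hSL : p ^ k ∣ Nat.card SL(2, F) := by
    rw [card_SL_two, hF, ← hk]
    exact (Dvd.intro _ (Nat.sq_sub_sq _ 1).symm).mul_left _
  have hGL : p ^ k ∣ Nat.card (GL (Fin n) (ZMod p)) :=
    (dvd_card_PSL_two_of_odd hpodd.pow hSL).trans (Subgroup.card_dvd_of_injective f hf)
  have hchoose : k.choose 2 < k := by interval_cases k <;> decide
  exact (le_choose_two_of_pow_dvd_card_GL hGL).not_gt
    ((Nat.choose_le_choose 2 hnk).trans_lt hchoose)

/-- If `q > 4` is a power of `2`, `p` is an odd prime with `q + 1` a power of `p`, and `n`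
is a positive integer with `p^n ≤ q + 1`, then there is no injective group homomorphism
from `PSL₂(q)` into `GL_n(p)`. -/
theorem no_embedding_psl2_even_into_gln_p (q p : ℕ) (hq2 : ∃ m : ℕ, q = 2 ^ m)
    (hq4 : 4 < q) (hp : p.Prime) (hpodd : Odd p) (hpow : ∃ k : ℕ, q + 1 = p ^ k)
    (n : ℕ) (hn : 0 < n) (hle : p ^ n ≤ q + 1)
    (F : Type*) [Field F] [Fintype F] (hF : Fintype.card F = q) :
    ¬ ∃ f : PSL(2, F) →* GL (Fin n) (ZMod p), Function.Injective f :=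
  no_embedding_psl2_even_into_gln_p_general q p hq2 hp hpodd hpow n hle F hF
end
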